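/- arXiv:1603.00234 — 3 statements merged into one kernel-verified Lean document; each statement's English description precedes it below -/
import Mathlib

section
/- The map θ : Sym^3(S^1) → S^1 sending an unordered triple {λ1, λ2, λ3} to the product λ1 λ2 λ3 is a locally trivial fiber bundle. -/
open CategoryTheory

/-- The singular chain complex of a topological space with coefficients in `R`. -/
noncomputable def singularChainComplex (R : Type) [CommRing R] :
    TopCat ⥤ ChainComplex (ModuleCat R) ℕ :=
  TopCat.toSSet ⋙ ((SimplicialObject.whiskering _ _).obj (ModuleCat.free R)) ⋙
    AlgebraicTopology.alternatingFaceMapComplex _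

/-- Singular homology with coefficients in `R`, as a functor `TopCat ⥤ ModuleCat R`. -/
noncomputable def singularHomology (R : Type) [CommRing R] (n : ℕ) :
    TopCat ⥤ ModuleCat R :=
  singularChainComplex R ⋙ HomologicalComplex.homologyFunctor _ _ n

/-- The `n`-th Betti number of a topological space with coefficients in `R`. -/
noncomputable def bettiNumber (R : Type) [CommRing R] (n : ℕ) (X : Type)
    [TopologicalSpace X] : ℕ :=
  Module.finrank R ((singularHomology R n).obj (TopCat.of X))

/-- The setoid on `Fin n → X` identifying tuples up to permutation. -/
def symmSetoid (X : Type) (n : ℕ) : Setoid (Fin n → X) where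
  r x y := ∃ e : Equiv.Perm (Fin n), x ∘ e = y
  iseqv := by
    refine ⟨fun x => ⟨Equiv.refl _, rfl⟩, ?_, ?_⟩
    · rintro x y ⟨e, rfl⟩
      exact ⟨e.symm, by ext i; simp⟩
    · rintro x y z ⟨e, rfl⟩ ⟨f, rfl⟩
      exact ⟨f.trans e, by ext i; simp⟩

/-- The `n`-th symmetric product of a topological space, with the quotient topology. -/
def SymProd (X : Type) [TopologicalSpace X] (n : ℕ) : Type :=
  Quotient (symmSetoid X n)

instance (X : Type) [TopologicalSpace X] (n : ℕ) : TopologicalSpace (SymProd X n) :=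
  instTopologicalSpaceQuotient

/-- The product map `θ : Sym³(S¹) → S¹`, `{λ₁, λ₂, λ₃} ↦ λ₁λ₂λ₃`. -/
noncomputable def theta : SymProd Circle 3 → Circle :=
  Quotient.lift (fun f : Fin 3 → Circle => ∏ i, f i)
    (by rintro x y ⟨e, rfl⟩; exact (Equiv.prod_comp e x).symm)

/-! The circle acts on `Sym³(S¹)` by rotating all three points at once, and `θ (c • q) = c³ θ q`.
Away from `b = -μ`, the principal cube root `c b` of `b / μ` depends continuously on `b` and
satisfies `(c b)³ μ = b`, so `x ↦ (θ x, (c (θ x))⁻¹ • x)` trivializes `θ` over `S¹ ∖ {-μ}` with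
fiber `θ⁻¹(μ)`. -/

namespace SymProd

variable {X : Type} [TopologicalSpace X] {n : ℕ} {M : Type*}

def mk (f : Fin n → X) : SymProd X n :=
  Quotient.mk _ f

@[elab_as_elim]
theorem ind {p : SymProd X n → Prop} (h : ∀ f, p (mk f)) (q : SymProd X n) : p q :=
  Quotient.ind h q

theorem isOpenMap_mk : IsOpenMap (mk : (Fin n → X) → SymProd X n) := by
  intro s hs
  have saturation : mk ⁻¹' (mk '' s : Set (SymProd X n)) =
      ⋃ e : Equiv.Perm (Fin n), (fun f : Fin n → X => f ∘ e) ⁻¹' s := by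
    ext y
    simp only [Set.mem_preimage, Set.mem_image, Set.mem_iUnion]
    constructor
    · rintro ⟨x, hx, hxy⟩
      obtain ⟨e, rfl⟩ := Quotient.exact hxy
      exact ⟨e.symm, by simpa [Function.comp_def] using hx⟩
    · rintro ⟨e, he⟩
      exact ⟨y ∘ e, he, Quotient.sound ⟨e.symm, by ext i; simp⟩⟩
  refine isOpen_coinduced.mpr ?_
  change IsOpen (mk ⁻¹' _)
  rw [saturation]
  exact isOpen_iUnion fun e => hs.preimage (continuous_pi fun i => continuous_apply (e i))

theorem isOpenQuotientMap_mk : IsOpenQuotientMap (mk : (Fin n → X) → SymProd X n) :=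
  ⟨Quotient.mk_surjective, continuous_quotient_mk', isOpenMap_mk⟩

instance [SMul M X] : SMul M (SymProd X n) :=
  ⟨fun c => Quotient.map (c • ·) (by rintro x y ⟨e, rfl⟩; exact ⟨e, rfl⟩)⟩

theorem smul_mk [SMul M X] (c : M) (f : Fin n → X) : c • mk f = mk (c • f) :=
  rfl

instance [Monoid M] [MulAction M X] : MulAction M (SymProd X n) where
  one_smul q := by
    induction q using SymProd.ind
    rw [smul_mk, one_smul]
  mul_smul c d q := by
    induction q using SymProd.ind
    simp only [smul_mk, mul_smul]

instance [TopologicalSpace M] [SMul M X] [ContinuousSMul M X] :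
    ContinuousSMul M (SymProd X n) where
  continuous_smul := by
    rw [← (IsOpenQuotientMap.id.prodMap isOpenQuotientMap_mk).continuous_comp_iff]
    exact continuous_quotient_mk'.comp continuous_smul

end SymProd

theorem continuous_theta : Continuous theta :=
  continuous_quot_lift _ (continuous_finsetProd _ fun i _ => continuous_apply i)

theorem theta_mk (f : Fin 3 → Circle) : theta (SymProd.mk f) = ∏ i, f i :=
  rfl

theorem theta_smul (c : Circle) (q : SymProd Circle 3) : theta (c • q) = c ^ 3 * theta q := by
  induction q using SymProd.ind with
  | h f => simp [SymProd.smul_mk, theta_mk, Finset.prod_mul_distrib]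

namespace Circle

noncomputable def nthRoot (n : ℕ) (z : Circle) : Circle :=
  exp (Complex.arg z / n)

theorem nthRoot_pow {n : ℕ} (hn : n ≠ 0) (z : Circle) : nthRoot n z ^ n = z := by
  rw [nthRoot, ← exp_nsmul, nsmul_eq_mul, mul_div_cancel₀ _ (Nat.cast_ne_zero.mpr hn), exp_arg]

theorem coe_mem_slitPlane {z : Circle} (hz : z ≠ -1) : (z : ℂ) ∈ Complex.slitPlane := by
  refine Complex.mem_slitPlane_iff_arg.mpr ⟨fun harg => hz (Subtype.ext ?_), coe_ne_zero z⟩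
  rw [← exp_arg z, harg, coe_exp, Complex.exp_pi_mul_I, coe_neg, coe_one]

theorem continuousAt_nthRoot (n : ℕ) {z : Circle} (hz : z ≠ -1) : ContinuousAt (nthRoot n) z :=
  exp.continuous.continuousAt.comp <|
    ((Complex.continuousAt_arg (coe_mem_slitPlane hz)).comp
      continuous_subtype_val.continuousAt).div_const _

end Circle

section EquivariantTrivialization

variable {G E B : Type*} [Group G] [TopologicalSpace G] [ContinuousInv G]
  [TopologicalSpace E] [MulAction G E] [ContinuousSMul G E] [Group B] [TopologicalSpace B]

def equivariantLocalTrivialization {θ : E → B} (hθ : Continuous θ) (φ : G →* B)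
    (hφ : ∀ g x, θ (g • x) = φ g * θ x) {U : Set B} {μ : B} {s : B → G}
    (hs : ContinuousOn s U) (hsφ : ∀ b ∈ U, φ (s b) * μ = b) :
    {x // θ x ∈ U} ≃ₜ U × {x // θ x = μ} where
  toFun x := (⟨θ x, x.2⟩, ⟨(s (θ x))⁻¹ • x.1, by
    rw [hφ, map_inv, inv_mul_eq_iff_eq_mul, hsφ _ x.2]⟩)
  invFun p := ⟨s p.1 • p.2.1, by rw [hφ, p.2.2, hsφ _ p.1.2]; exact p.1.2⟩
  left_inv x := Subtype.ext (smul_inv_smul _ _)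
  right_inv p := by
    have hθp : θ (s p.1 • p.2.1) = p.1 := by rw [hφ, p.2.2, hsφ _ p.1.2]
    ext
    · exact hθp
    · simp only [hθp, inv_smul_smul]
  continuous_toFun := by
    have hsθ : Continuous fun x : {x // θ x ∈ U} => s (θ x) :=
      hs.comp_continuous (hθ.comp continuous_subtype_val) fun x => x.2
    exact ((hθ.comp continuous_subtype_val).subtype_mk _).prodMk
      ((hsθ.inv.smul continuous_subtype_val).subtype_mk _)
  continuous_invFun := by
    have hs' : Continuous fun p : U × {x // θ x = μ} => s p.1 :=
      hs.comp_continuous (continuous_subtype_val.comp continuous_fst) fun p => p.1.2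
    exact (hs'.smul (continuous_subtype_val.comp continuous_snd)).subtype_mk _

end EquivariantTrivialization

/-- `θ : Sym³(S¹) → S¹` is a locally trivial fiber bundle: it is continuous, and every
point `μ ∈ S¹` has an open neighborhood `U` over which `θ` is trivial with fiber
`θ⁻¹(μ)`. -/
theorem theta_isFiberBundle :
    Continuous theta ∧
      ∀ μ : Circle, ∃ U : Set Circle, IsOpen U ∧ μ ∈ U ∧
        ∃ h : {x : SymProd Circle 3 // theta x ∈ U} ≃ₜ U × {x : SymProd Circle 3 // theta x = μ},
          ∀ x, ((h x).1 : Circle) = theta x.1 := by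
  refine ⟨continuous_theta, fun μ => ?_⟩
  let U : Set Circle := {b | b / μ ≠ -1}
  have hU : IsOpen U := isOpen_ne_fun (continuous_div_right' μ) continuous_const
  have hμU : μ ∈ U := by simpa [U] using (Circle.neg_ne_self 1).symm
  let cubeRoot (b : Circle) : Circle := Circle.nthRoot 3 (b / μ)
  have hroot : ContinuousOn cubeRoot U := fun b hb =>
    ((Circle.continuousAt_nthRoot 3 hb).comp (f := (· / μ))
      (continuous_div_right' μ).continuousAt).continuousWithinAt
  have hroot_pow : ∀ b ∈ U, powMonoidHom 3 (cubeRoot b) * μ = b := fun b _ => by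
    simp [cubeRoot, Circle.nthRoot_pow]
  exact ⟨U, hU, hμU,
    equivariantLocalTrivialization continuous_theta (powMonoidHom 3) theta_smul hroot hroot_pow,
    fun _ => rfl⟩
end

section
/- The fiber θ^{-1}(1) of the product map θ : Sym^3(S^1) → S^1 is homeomorphic to the standard 2-simplex Δ^2 = {(d1, d2) ∈ [0,1]^2 : d1 + d2 ≤ 1}, via the map t(d1, d2) = {λ, λ e^{2πi d1}, λ e^{2πi(d1+d2)}} where λ = e^{−2πi(2d1+d2)/3}. -/
/-!
Lift a configuration of `n + 1` points of the circle to reals `s₀ ≤ s₁ ≤ ⋯ ≤ sₙ ≤ s₀ + 1`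
(the points in cyclic order, as fractions of a turn). Once its sum is fixed, such a lift is
unique: the counting function `t ↦ ∑ ⌊t - sᵢ⌋` depends only on the points and on the sum, and
`sⱼ` is the first `t` at which it reaches `j - n`. A lift exists by sorting fractional parts;
moving the top point down by one turn keeps the shape and lowers the sum by one, so when the
product of the points is `1` (integral sum) there is a lift of sum `0`. For three points the
lifts of sum `0` are exactly the phases `(-(2d₁ + d₂)/3, (d₁ - d₂)/3, (d₁ + 2d₂)/3)` of
`t(d₁, d₂)`. Hence `t` is a continuous bijection onto `θ⁻¹(1)`, and it is closed because `Δ²` is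
compact and the quotient map onto the symmetric product is closed: the saturation of a closed
set is a finite union of its preimages under permutations of the coordinates.
-/

open CategoryTheory

/-- The standard 2-simplex `Δ² = {(d₁, d₂) ∈ [0,1]² : d₁ + d₂ ≤ 1}`. -/
def Delta2 : Type :=
  {d : ℝ × ℝ // d.1 ∈ Set.Icc (0:ℝ) 1 ∧ d.2 ∈ Set.Icc (0:ℝ) 1 ∧ d.1 + d.2 ≤ 1}

instance : TopologicalSpace Delta2 := instTopologicalSpaceSubtype

open Real in
/-- The map `t : Δ² → θ⁻¹(1)`, `t(d₁,d₂) = {λ, λe^{2πi d₁}, λe^{2πi(d₁+d₂)}}` with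
`λ = e^{-2πi(2d₁+d₂)/3}`. -/
noncomputable def tMap (d : Delta2) : SymProd Circle 3 :=
  Quotient.mk (symmSetoid Circle 3)
    ![Circle.exp (-(2 * π * (2 * d.1.1 + d.1.2) / 3)),
      Circle.exp (-(2 * π * (2 * d.1.1 + d.1.2) / 3)) * Circle.exp (2 * π * d.1.1),
      Circle.exp (-(2 * π * (2 * d.1.1 + d.1.2) / 3)) * Circle.exp (2 * π * (d.1.1 + d.1.2))]

open Finset Real Topology

theorem Circle.exp_sum {ι : Type*} (s : Finset ι) (x : ι → ℝ) :
    Circle.exp (∑ i ∈ s, x i) = ∏ i ∈ s, Circle.exp (x i) :=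
  map_sum Circle.expHom x s

theorem Circle.exp_two_pi_mul_eq_iff {a b : ℝ} :
    Circle.exp (2 * π * a) = Circle.exp (2 * π * b) ↔ ∃ k : ℤ, a = b + k := by
  rw [Circle.exp_eq_exp]
  refine exists_congr fun k => ⟨fun h => ?_, fun h => by rw [h]; ring⟩
  have := pi_pos
  field_simp at h
  linarith

theorem Circle.exists_exp_two_pi_mul_eq (z : Circle) :
    ∃ a ∈ Set.Ico (0 : ℝ) 1, Circle.exp (2 * π * a) = z := by
  obtain ⟨θ, rfl⟩ := Circle.exp_surjective z
  refine ⟨Int.fract (θ / (2 * π)), ⟨Int.fract_nonneg _, Int.fract_lt_one _⟩, ?_⟩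
  have := pi_pos
  rw [Int.fract, mul_sub, mul_div_cancel₀ _ (by positivity)]
  exact Circle.exp_eq_exp.2 ⟨-⌊θ / (2 * π)⌋, by push_cast; ring⟩

theorem isClosedMap_symProd_mk {X : Type} [TopologicalSpace X] {n : ℕ} :
    IsClosedMap (Quotient.mk (symmSetoid X n)) := by
  intro C hC
  have hq : IsQuotientMap (Quotient.mk (symmSetoid X n)) := isQuotientMap_quotient_mk'
  refine hq.isClosed_preimage.1 ?_
  have : Quotient.mk (symmSetoid X n) ⁻¹' (Quotient.mk _ '' C) =
      ⋃ e : Equiv.Perm (Fin n), (fun x => x ∘ e) ⁻¹' C := by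
    ext x
    simp only [Set.mem_preimage, Set.mem_image, Set.mem_iUnion, Quotient.eq]
    constructor
    · rintro ⟨c, hc, e, rfl⟩
      exact ⟨e.symm, by simpa [Function.comp_assoc] using hc⟩
    · rintro ⟨e, he⟩
      exact ⟨x ∘ e, he, e.symm, by simp [Function.comp_assoc]⟩
  rw [this]
  exact isClosed_iUnion_of_finite fun e => hC.preimage (by fun_prop)

noncomputable def symProdExp {n : ℕ} (s : Fin n → ℝ) : SymProd Circle n :=
  Quotient.mk _ fun i => Circle.exp (2 * π * s i)

section UnitWindow

variable {n : ℕ}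

def IsUnitWindow (s : Fin (n + 1) → ℝ) : Prop :=
  Monotone s ∧ s (Fin.last n) ≤ s 0 + 1

theorem IsUnitWindow.le_add_one {s : Fin (n + 1) → ℝ} (hs : IsUnitWindow s)
    (i i' : Fin (n + 1)) : s i ≤ s i' + 1 :=
  (hs.1 (Fin.le_last i)).trans (hs.2.trans (by linarith [hs.1 (Fin.zero_le i')]))

theorem IsUnitWindow.le_sum_floor_iff {s : Fin (n + 1) → ℝ} (hs : IsUnitWindow s)
    (j : Fin (n + 1)) (t : ℝ) : (j : ℤ) - n ≤ ∑ i, ⌊t - s i⌋ ↔ s j ≤ t := by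
  constructor
  · intro hle
    by_contra! hlt
    have hterm (i : Fin (n + 1)) : ⌊t - s i⌋ ≤ if j ≤ i then -1 else 0 := by
      refine Int.floor_le_iff.2 ?_
      split_ifs with hij
      · push_cast; linarith [hs.1 hij]
      · push_cast; linarith [hs.le_add_one j i]
    have hsum : ∑ i : Fin (n + 1), (if j ≤ i then (-1 : ℤ) else 0) = -(n + 1 - j) := by
      simp [Finset.sum_ite, filter_le_eq_Ici, Fin.card_Ici]
    linarith [Finset.sum_le_sum (s := univ) fun i _ => hterm i]
  · intro hle
    have hterm (i : Fin (n + 1)) : (if j < i then -1 else 0) ≤ ⌊t - s i⌋ := by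
      refine Int.le_floor.2 ?_
      split_ifs with hij
      · push_cast; linarith [hs.le_add_one i j]
      · push_cast; linarith [hs.1 (not_lt.1 hij)]
    have hsum : ∑ i : Fin (n + 1), (if j < i then (-1 : ℤ) else 0) = -(n - j) := by
      simp only [sum_ite, filter_lt_eq_Ioi, sum_neg_distrib, sum_const, Fin.card_Ioi,
        add_tsub_cancel_right, Int.nsmul_eq_mul, mul_one]
      omega
    linarith [Finset.sum_le_sum (s := univ) fun i _ => hterm i]

theorem IsUnitWindow.eq_of_eq_comp_add_int {s s' : Fin (n + 1) → ℝ} (hs : IsUnitWindow s)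
    (hs' : IsUnitWindow s') (hsum : ∑ i, s i = ∑ i, s' i) (e : Equiv.Perm (Fin (n + 1)))
    (k : Fin (n + 1) → ℤ) (h : ∀ i, s' i = s (e i) + k i) : s = s' := by
  have hk : ∑ i, k i = 0 := by
    have : ((∑ i, k i : ℤ) : ℝ) = ∑ i, s' i - ∑ i, s i := by
      simp only [h, sum_add_distrib, Equiv.sum_comp e s, Int.cast_sum]
      ring
    rw [hsum, sub_self] at this
    exact_mod_cast this
  have hfloor (t : ℝ) : ∑ i, ⌊t - s' i⌋ = ∑ i, ⌊t - s i⌋ := by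
    simp only [h, ← sub_sub, Int.floor_sub_intCast, sum_sub_distrib, hk, sub_zero]
    exact Equiv.sum_comp e (fun j => ⌊t - s j⌋)
  funext j
  refine le_antisymm ((hs.le_sum_floor_iff j _).1 ?_) ((hs'.le_sum_floor_iff j _).1 ?_)
  · rw [← hfloor]; exact (hs'.le_sum_floor_iff j _).2 le_rfl
  · rw [hfloor]; exact (hs.le_sum_floor_iff j _).2 le_rfl

def rotateDown (s : Fin (n + 1) → ℝ) : Fin (n + 1) → ℝ :=
  Fin.cons (s (Fin.last n) - 1) (s ∘ Fin.castSucc)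

theorem sum_rotateDown (s : Fin (n + 1) → ℝ) : ∑ i, rotateDown s i = ∑ i, s i - 1 := by
  rw [rotateDown, Fin.sum_cons, Fin.sum_univ_castSucc s]
  simp only [Function.comp_apply]
  ring

theorem rotateDown_finRotate (s : Fin (n + 1) → ℝ) (i : Fin (n + 1)) :
    rotateDown s (finRotate (n + 1) i) = s i - if i = Fin.last n then 1 else 0 := by
  rw [rotateDown, ← congrFun (Fin.snoc_eq_cons_rotate _ _) i]
  induction i using Fin.lastCases with
  | last => simp
  | cast j => simp [(Fin.castSucc_lt_last j).ne]

theorem IsUnitWindow.rotateDown {s : Fin (n + 1) → ℝ} (hs : IsUnitWindow s) :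
    IsUnitWindow (rotateDown s) := by
  have hle (i : Fin (n + 1)) : _root_.rotateDown s i ≤ s i := by
    induction i using Fin.cases with
    | zero => simpa [_root_.rotateDown] using hs.2
    | succ j => exact hs.1 (Fin.castSucc_le_succ j)
  refine ⟨Fin.monotone_iff_le_succ.2 fun i => hle _, ?_⟩
  simpa [_root_.rotateDown] using hle (Fin.last n)

theorem symProdExp_rotateDown (s : Fin (n + 1) → ℝ) :
    symProdExp (rotateDown s) = symProdExp s :=
  Quotient.sound ⟨finRotate (n + 1), funext fun i => Circle.exp_two_pi_mul_eq_iff.2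
    ⟨-if i = Fin.last n then 1 else 0, by rw [rotateDown_finRotate]; push_cast; ring⟩⟩

theorem IsUnitWindow.eq_of_symProdExp_eq {s s' : Fin (n + 1) → ℝ} (hs : IsUnitWindow s)
    (hs' : IsUnitWindow s') (hsum : ∑ i, s i = ∑ i, s' i) (h : symProdExp s = symProdExp s') :
    s = s' := by
  obtain ⟨e, he⟩ := Quotient.exact h
  choose k hk using fun i => Circle.exp_two_pi_mul_eq_iff.1 (congrFun he i).symm
  exact hs.eq_of_eq_comp_add_int hs' hsum e k hk

theorem IsUnitWindow.exists_sum_eq_zero {s : Fin (n + 1) → ℝ} (hs : IsUnitWindow s) (m : ℕ)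
    (hsum : ∑ i, s i = m) :
    ∃ s', IsUnitWindow s' ∧ ∑ i, s' i = 0 ∧ symProdExp s' = symProdExp s := by
  induction m generalizing s with
  | zero => exact ⟨s, hs, by simpa using hsum, rfl⟩
  | succ m ih =>
    have hsum' : ∑ i, _root_.rotateDown s i = m := by rw [sum_rotateDown, hsum]; push_cast; ring
    obtain ⟨s', hs', hsum', h⟩ := ih hs.rotateDown hsum'
    exact ⟨s', hs', hsum', h.trans (symProdExp_rotateDown s)⟩

theorem exists_isUnitWindow_nonneg (f : Fin (n + 1) → Circle) :
    ∃ s, IsUnitWindow s ∧ (∀ i, 0 ≤ s i) ∧ symProdExp s = Quotient.mk _ f := by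
  choose a ha hfa using fun i => Circle.exists_exp_two_pi_mul_eq (f i)
  refine ⟨a ∘ Tuple.sort a, ⟨Tuple.monotone_sort a, ?_⟩, fun i => (ha _).1, ?_⟩
  · show a _ ≤ a _ + 1
    linarith [(ha (Tuple.sort a (Fin.last n))).2, (ha (Tuple.sort a 0)).1]
  · exact Quotient.sound ⟨(Tuple.sort a).symm, funext fun i => by simp [hfa]⟩

theorem exists_isUnitWindow_sum_eq_zero (f : Fin (n + 1) → Circle) (hf : ∏ i, f i = 1) :
    ∃ s, IsUnitWindow s ∧ ∑ i, s i = 0 ∧ symProdExp s = Quotient.mk _ f := by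
  obtain ⟨s, hs, hnonneg, hsf⟩ := exists_isUnitWindow_nonneg f
  obtain ⟨e, he⟩ := Quotient.exact hsf
  have hexp : Circle.exp (2 * π * ∑ i, s i) = 1 := by
    rw [← hf, ← he, Finset.mul_sum, Circle.exp_sum]
    exact (Equiv.prod_comp e _).symm
  obtain ⟨m, hm⟩ := Circle.exp_eq_one.1 hexp
  have hsum : ∑ i, s i = m := by
    have := pi_pos
    field_simp at hm
    linarith
  have hm : 0 ≤ m := by exact_mod_cast hsum ▸ sum_nonneg fun i _ => hnonneg i
  lift m to ℕ using hm
  obtain ⟨s', hs', hsum', h⟩ := hs.exists_sum_eq_zero m (by exact_mod_cast hsum)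
  exact ⟨s', hs', hsum', h.trans hsf⟩

end UnitWindow

instance : CompactSpace Delta2 := by
  have hS : {d : ℝ × ℝ | d.1 ∈ Set.Icc (0 : ℝ) 1 ∧ d.2 ∈ Set.Icc (0 : ℝ) 1 ∧
      d.1 + d.2 ≤ 1} = Set.Icc 0 1 ×ˢ Set.Icc 0 1 ∩ {d | d.1 + d.2 ≤ 1} := by
    ext; simp only [Set.mem_inter_iff, Set.mem_prod, Set.mem_ofPred_eq, and_assoc]
  have hcompact : IsCompact (Set.Icc (0 : ℝ) 1 ×ˢ Set.Icc (0 : ℝ) 1 ∩ {d | d.1 + d.2 ≤ 1}) :=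
    (isCompact_Icc.prod isCompact_Icc).inter_right (isClosed_le (by fun_prop) (by fun_prop))
  rw [← hS] at hcompact
  exact isCompact_iff_compactSpace.1 hcompact

noncomputable def simplexLift (d : Delta2) : Fin 3 → ℝ :=
  ![-(2 * d.1.1 + d.1.2) / 3, (d.1.1 - d.1.2) / 3, (d.1.1 + 2 * d.1.2) / 3]

theorem continuous_simplexLift : Continuous simplexLift := by
  refine continuous_pi fun i => ?_
  fin_cases i <;> simp only [simplexLift] <;> fun_prop

theorem isUnitWindow_simplexLift (d : Delta2) : IsUnitWindow (simplexLift d) := by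
  obtain ⟨⟨x, y⟩, ⟨hx, -⟩, ⟨hy, -⟩, hxy⟩ := d
  simp only [IsUnitWindow, simplexLift, monotone_vecCons, Matrix.cons_val_zero, Fin.reduceLast,
    Matrix.cons_val]
  refine ⟨⟨?_, ?_, monotone_vecEmpty⟩, ?_⟩ <;> linarith

theorem sum_simplexLift (d : Delta2) : ∑ i, simplexLift d i = 0 := by
  simp only [simplexLift, Fin.sum_univ_three, Matrix.cons_val]
  ring

theorem simplexLift_injective : Function.Injective simplexLift := by
  intro d d' h
  simp only [simplexLift, Matrix.vecCons_inj, and_true] at h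
  obtain ⟨h0, h1, -⟩ := h
  refine Subtype.ext (Prod.ext ?_ ?_) <;> linarith

theorem IsUnitWindow.exists_simplexLift_eq {s : Fin 3 → ℝ} (hs : IsUnitWindow s)
    (hsum : ∑ i, s i = 0) : ∃ d, simplexLift d = s := by
  have h01 : s 0 ≤ s 1 := hs.1 (by decide)
  have h12 : s 1 ≤ s 2 := hs.1 (by decide)
  have h20 : s 2 ≤ s 0 + 1 := hs.2
  rw [Fin.sum_univ_three] at hsum
  refine ⟨⟨(s 1 - s 0, s 2 - s 1), ⟨by linarith, by linarith⟩, ⟨by linarith, by linarith⟩,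
    by dsimp only; linarith⟩, ?_⟩
  ext i
  fin_cases i <;>
    simp only [simplexLift, Fin.zero_eta, Fin.mk_one, Fin.reduceFinMk, Matrix.cons_val] <;>
    linarith

theorem tMap_eq_symProdExp (d : Delta2) : tMap d = symProdExp (simplexLift d) := by
  refine congrArg (Quotient.mk _) (funext fun i => ?_)
  fin_cases i <;>
    simp only [simplexLift, Fin.zero_eta, Fin.mk_one, Fin.reduceFinMk, Matrix.cons_val,
      ← Circle.exp_add] <;>
    congr 1 <;> ring

theorem theta_symProdExp (s : Fin 3 → ℝ) :
    theta (symProdExp s) = Circle.exp (2 * π * ∑ i, s i) := by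
  rw [Finset.mul_sum, Circle.exp_sum]
  rfl

theorem theta_tMap (d : Delta2) : theta (tMap d) = 1 := by
  rw [tMap_eq_symProdExp, theta_symProdExp, sum_simplexLift, mul_zero, Circle.exp_zero]

theorem tMap_injective : Function.Injective tMap := by
  intro d d' h
  rw [tMap_eq_symProdExp, tMap_eq_symProdExp] at h
  refine simplexLift_injective ((isUnitWindow_simplexLift d).eq_of_symProdExp_eq
    (isUnitWindow_simplexLift d') ?_ h)
  rw [sum_simplexLift, sum_simplexLift]

theorem exists_tMap_eq {x : SymProd Circle 3} (hx : theta x = 1) : ∃ d, tMap d = x := by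
  induction x using Quotient.ind with | _ f => ?_
  obtain ⟨s, hs, hsum, hsf⟩ := exists_isUnitWindow_sum_eq_zero f hx
  obtain ⟨d, rfl⟩ := hs.exists_simplexLift_eq hsum
  exact ⟨d, (tMap_eq_symProdExp d).trans hsf⟩

theorem tMap_eq_comp :
    tMap = Quotient.mk _ ∘ fun d i => Circle.exp (2 * π * simplexLift d i) :=
  funext tMap_eq_symProdExp

theorem continuous_exp_simplexLift :
    Continuous fun d i => Circle.exp (2 * π * simplexLift d i) :=
  continuous_pi fun i => Circle.exp.continuous.comp
    (continuous_const.mul ((continuous_apply i).comp continuous_simplexLift))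

theorem continuous_tMap : Continuous tMap := by
  rw [tMap_eq_comp]
  exact continuous_quot_mk.comp continuous_exp_simplexLift

theorem isClosedMap_tMap : IsClosedMap tMap := by
  rw [tMap_eq_comp]
  exact isClosedMap_symProd_mk.comp continuous_exp_simplexLift.isClosedMap

/-- The fiber `θ⁻¹(1)` of the product map `θ : Sym³(S¹) → S¹` is homeomorphic to the
standard 2-simplex, via the explicit map `t`. -/
theorem fiber_theta_homeomorph_simplex :
    ∃ h : Delta2 ≃ₜ {x : SymProd Circle 3 // theta x = 1},
      ∀ d : Delta2, (h d : SymProd Circle 3) = tMap d := by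
  let t : Delta2 → {x : SymProd Circle 3 // theta x = 1} := fun d => ⟨tMap d, theta_tMap d⟩
  have ht : IsHomeomorph t := isHomeomorph_iff_continuous_isClosedMap_bijective.2
    ⟨continuous_tMap.subtype_mk _, isClosedMap_tMap.codRestrict theta_tMap,
      fun d d' h => tMap_injective (congrArg Subtype.val h),
      fun x => (exists_tMap_eq x.2).imp fun d hd => Subtype.ext hd⟩
  exact ⟨ht.homeomorph t, fun d => rfl⟩
end

section
/- For each unordered triple {λ1, λ2, λ3} of points of S^1 with λ1λ2λ3 = 1, there is exactly one triple (s1, s2, s3) ∈ R^3 with s1 ≤ s2 ≤ s3 ≤ s1 + 1, s1 + s2 + s3 = 0, and {e^{2πi s1}, e^{2πi s2}, e^{2πi s3}} = {λ1, λ2, λ3} as multisets. -/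
/-!
Existence: lift the points into a window `[x, x + 1)` and sort the lifts. Their sum is an
integer because the product of the points is `1`, and the cyclic shift
`(s₁, s₂, s₃) ↦ (s₂, s₃, s₁ + 1)`, which keeps both `s₁ ≤ s₂ ≤ s₃ ≤ s₁ + 1` and the points
while raising the sum by one, brings it to `0`.
Uniqueness: `x ↦ ⌊x - s₁⌋ + ⌊x - s₂⌋ + ⌊x - s₃⌋ + (s₁ + s₂ + s₃)` depends only on the points,
and for a triple with `s₁ ≤ s₂ ≤ s₃ ≤ s₁ + 1` the lift `sⱼ` is the least `x` at which the floor
sum reaches `j - 3`.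
-/

open Real

namespace Circle

theorem exp_two_pi_mul_add_one (a : ℝ) : exp (2 * π * (a + 1)) = exp (2 * π * a) := by
  rw [mul_add, mul_one, exp_add_two_pi]

theorem exp_two_pi_mul_sub_one (a : ℝ) : exp (2 * π * (a - 1)) = exp (2 * π * a) := by
  rw [mul_sub, mul_one, exp_sub_two_pi]

theorem exists_intCast_of_exp_two_pi_mul_eq {a b : ℝ}
    (h : exp (2 * π * a) = exp (2 * π * b)) : ∃ n : ℤ, a = b + n := by
  obtain ⟨n, hn⟩ := exp_eq_exp.1 h
  exact ⟨n, mul_left_cancel₀ two_pi_pos.ne' (by rw [hn]; ring)⟩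

noncomputable def turn (z : Circle) : ℝ := Complex.arg z / (2 * π)

theorem exp_two_pi_mul_turn (z : Circle) : exp (2 * π * z.turn) = z := by
  rw [turn, mul_div_cancel₀ _ two_pi_pos.ne', exp_arg]

theorem exists_exp_two_pi_mul_eq_of_mem_Ico (z : Circle) (x : ℝ) :
    ∃ y ∈ Set.Ico x (x + 1), exp (2 * π * y) = z := by
  refine ⟨x + Int.fract (z.turn - x), ?_, ?_⟩
  · exact ⟨le_add_of_nonneg_right (Int.fract_nonneg _),
      by linarith [Int.fract_lt_one (z.turn - x)]⟩
  · rw [← Int.self_sub_floor, show 2 * π * (x + (z.turn - x - ⌊z.turn - x⌋)) =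
      2 * π * z.turn - ⌊z.turn - x⌋ * (2 * π) by ring, periodic_exp.sub_int_mul_eq,
      exp_two_pi_mul_turn]

theorem floor_sub_add_eq_of_exp_two_pi_mul_eq {a b : ℝ}
    (h : exp (2 * π * a) = exp (2 * π * b)) (x : ℝ) :
    (⌊x - a⌋ : ℝ) + a = ⌊x - b⌋ + b := by
  obtain ⟨n, rfl⟩ := exists_intCast_of_exp_two_pi_mul_eq h
  rw [show x - (b + n) = x - b - n by ring, Int.floor_sub_intCast]
  push_cast
  ring

end Circle

def IsSortedInPeriod (s : ℝ × ℝ × ℝ) : Prop :=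
  s.1 ≤ s.2.1 ∧ s.2.1 ≤ s.2.2 ∧ s.2.2 ≤ s.1 + 1

noncomputable def expMultiset (s : ℝ × ℝ × ℝ) : Multiset Circle :=
  {Circle.exp (2 * π * s.1), Circle.exp (2 * π * s.2.1), Circle.exp (2 * π * s.2.2)}

def cycleShift (s : ℝ × ℝ × ℝ) : ℝ × ℝ × ℝ := (s.2.1, s.2.2, s.1 + 1)

def cycleUnshift (s : ℝ × ℝ × ℝ) : ℝ × ℝ × ℝ := (s.2.2 - 1, s.1, s.2.1)

noncomputable def floorCount (s : ℝ × ℝ × ℝ) (x : ℝ) : ℤ := ⌊x - s.1⌋ + ⌊x - s.2.1⌋ + ⌊x - s.2.2⌋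

theorem Multiset.insert_insert_singleton_rotate {α : Type*} (a b c : α) :
    ({b, c, a} : Multiset α) = {a, b, c} := by
  rw [Multiset.pair_comm c a]
  exact Multiset.cons_swap b a {c}

theorem expMultiset_cycleShift (s : ℝ × ℝ × ℝ) : expMultiset (cycleShift s) = expMultiset s := by
  rw [cycleShift, expMultiset, Circle.exp_two_pi_mul_add_one,
    Multiset.insert_insert_singleton_rotate]
  rfl

theorem expMultiset_cycleUnshift (s : ℝ × ℝ × ℝ) :
    expMultiset (cycleUnshift s) = expMultiset s := by
  rw [cycleUnshift, expMultiset, Circle.exp_two_pi_mul_sub_one,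
    ← Multiset.insert_insert_singleton_rotate]
  rfl

theorem prod_expMultiset (s : ℝ × ℝ × ℝ) :
    (expMultiset s).prod = Circle.exp (2 * π * (s.1 + s.2.1 + s.2.2)) := by
  simp only [expMultiset, Multiset.insert_eq_cons, Multiset.prod_cons, Multiset.prod_singleton,
    mul_add, Circle.exp_add, mul_assoc]

theorem floorCount_add_sum_eq_of_expMultiset_eq {s t : ℝ × ℝ × ℝ}
    (h : expMultiset s = expMultiset t) (x : ℝ) :
    (floorCount s x : ℝ) + (s.1 + s.2.1 + s.2.2) = floorCount t x + (t.1 + t.2.1 + t.2.2) := by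
  let f (z : Circle) : ℝ := ⌊x - z.turn⌋ + z.turn
  have hf (a : ℝ) : f (Circle.exp (2 * π * a)) = ⌊x - a⌋ + a :=
    Circle.floor_sub_add_eq_of_exp_two_pi_mul_eq (Circle.exp_two_pi_mul_turn _) x
  have := congrArg (fun M => (M.map f).sum) h
  simp only [expMultiset, Multiset.insert_eq_cons, Multiset.map_cons, Multiset.map_singleton,
    Multiset.sum_cons, Multiset.sum_singleton, hf] at this
  simp only [floorCount]
  push_cast
  linarith

namespace IsSortedInPeriod

variable {s : ℝ × ℝ × ℝ}

theorem cycleShift (hs : IsSortedInPeriod s) : IsSortedInPeriod (cycleShift s) :=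
  ⟨hs.2.1, hs.2.2, by simp only [_root_.cycleShift]; linarith [hs.1]⟩

theorem cycleUnshift (hs : IsSortedInPeriod s) : IsSortedInPeriod (cycleUnshift s) :=
  ⟨by simp only [_root_.cycleUnshift]; linarith [hs.2.2], hs.1, by
    simp only [_root_.cycleUnshift]; linarith [hs.2.1]⟩

theorem exists_sum_eq_zero (hs : IsSortedInPeriod s) {k : ℤ} (hk : s.1 + s.2.1 + s.2.2 = k) :
    ∃ t, IsSortedInPeriod t ∧ t.1 + t.2.1 + t.2.2 = 0 ∧ expMultiset t = expMultiset s := by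
  induction k using Int.induction_on generalizing s with
  | zero => exact ⟨s, hs, by simpa using hk, rfl⟩
  | succ k ih =>
    obtain ⟨t, ht, ht0, htM⟩ := ih hs.cycleUnshift
      (by simp only [_root_.cycleUnshift]; push_cast at hk ⊢; linarith)
    exact ⟨t, ht, ht0, htM.trans (expMultiset_cycleUnshift s)⟩
  | pred k ih =>
    obtain ⟨t, ht, ht0, htM⟩ := ih hs.cycleShift
      (by simp only [_root_.cycleShift]; push_cast at hk ⊢; linarith)
    exact ⟨t, ht, ht0, htM.trans (expMultiset_cycleShift s)⟩

theorem fst_le_iff (hs : IsSortedInPeriod s) (x : ℝ) : s.1 ≤ x ↔ -2 ≤ floorCount s x := by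
  obtain ⟨h12, h23, h31⟩ := hs
  constructor
  · intro hx
    have h1 : 0 ≤ ⌊x - s.1⌋ := Int.floor_nonneg.2 (by linarith)
    have h2 : -1 ≤ ⌊x - s.2.1⌋ := Int.le_floor.2 (by push_cast; linarith)
    have h3 : -1 ≤ ⌊x - s.2.2⌋ := Int.le_floor.2 (by push_cast; linarith)
    simp only [floorCount]
    omega
  · contrapose!
    intro hx
    have h1 : ⌊x - s.1⌋ < 0 := Int.floor_lt.2 (by push_cast; linarith)
    have h2 : ⌊x - s.2.1⌋ < 0 := Int.floor_lt.2 (by push_cast; linarith)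
    have h3 : ⌊x - s.2.2⌋ < 0 := Int.floor_lt.2 (by push_cast; linarith)
    simp only [floorCount]
    omega

theorem snd_fst_le_iff (hs : IsSortedInPeriod s) (x : ℝ) : s.2.1 ≤ x ↔ -1 ≤ floorCount s x := by
  obtain ⟨h12, h23, h31⟩ := hs
  constructor
  · intro hx
    have h1 : 0 ≤ ⌊x - s.1⌋ := Int.floor_nonneg.2 (by linarith)
    have h2 : 0 ≤ ⌊x - s.2.1⌋ := Int.floor_nonneg.2 (by linarith)
    have h3 : -1 ≤ ⌊x - s.2.2⌋ := Int.le_floor.2 (by push_cast; linarith)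
    simp only [floorCount]
    omega
  · contrapose!
    intro hx
    have h1 : ⌊x - s.1⌋ < 1 := Int.floor_lt.2 (by push_cast; linarith)
    have h2 : ⌊x - s.2.1⌋ < 0 := Int.floor_lt.2 (by push_cast; linarith)
    have h3 : ⌊x - s.2.2⌋ < 0 := Int.floor_lt.2 (by push_cast; linarith)
    simp only [floorCount]
    omega

theorem snd_snd_le_iff (hs : IsSortedInPeriod s) (x : ℝ) : s.2.2 ≤ x ↔ 0 ≤ floorCount s x := by
  obtain ⟨h12, h23, h31⟩ := hs
  constructor
  · intro hx
    have h1 : 0 ≤ ⌊x - s.1⌋ := Int.floor_nonneg.2 (by linarith)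
    have h2 : 0 ≤ ⌊x - s.2.1⌋ := Int.floor_nonneg.2 (by linarith)
    have h3 : 0 ≤ ⌊x - s.2.2⌋ := Int.floor_nonneg.2 (by linarith)
    simp only [floorCount]
    omega
  · contrapose!
    intro hx
    have h1 : ⌊x - s.1⌋ < 1 := Int.floor_lt.2 (by push_cast; linarith)
    have h2 : ⌊x - s.2.1⌋ < 1 := Int.floor_lt.2 (by push_cast; linarith)
    have h3 : ⌊x - s.2.2⌋ < 0 := Int.floor_lt.2 (by push_cast; linarith)
    simp only [floorCount]
    omega

theorem eq_of_expMultiset_eq {t : ℝ × ℝ × ℝ} (hs : IsSortedInPeriod s) (ht : IsSortedInPeriod t)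
    (hsum : s.1 + s.2.1 + s.2.2 = t.1 + t.2.1 + t.2.2) (h : expMultiset s = expMultiset t) :
    s = t := by
  have hcount : floorCount s = floorCount t := funext fun x => by
    have := floorCount_add_sum_eq_of_expMultiset_eq h x
    exact_mod_cast (by linarith : (floorCount s x : ℝ) = floorCount t x)
  refine Prod.ext (eq_of_forall_ge_iff fun x => ?_) (Prod.ext (eq_of_forall_ge_iff fun x => ?_)
    (eq_of_forall_ge_iff fun x => ?_))
  · rw [hs.fst_le_iff, ht.fst_le_iff, hcount]
  · rw [hs.snd_fst_le_iff, ht.snd_fst_le_iff, hcount]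
  · rw [hs.snd_snd_le_iff, ht.snd_snd_le_iff, hcount]

end IsSortedInPeriod

theorem exists_isSortedInPeriod_expMultiset_eq (l1 l2 l3 : Circle) :
    ∃ s, IsSortedInPeriod s ∧ expMultiset s = {l1, l2, l3} := by
  have hx := Circle.exp_two_pi_mul_turn l1
  obtain ⟨y, ⟨hxy, hyx⟩, hy⟩ := Circle.exists_exp_two_pi_mul_eq_of_mem_Ico l2 l1.turn
  obtain ⟨z, ⟨hxz, hzx⟩, hz⟩ := Circle.exists_exp_two_pi_mul_eq_of_mem_Ico l3 l1.turn
  rcases le_total y z with hyz | hzy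
  · exact ⟨(l1.turn, y, z), ⟨hxy, hyz, hzx.le⟩, by rw [expMultiset, hx, hy, hz]⟩
  · exact ⟨(l1.turn, z, y), ⟨hxz, hzy, hyx.le⟩,
      by rw [expMultiset, hx, hy, hz, Multiset.pair_comm]⟩

open Real in
/-- For every unordered triple `{λ₁, λ₂, λ₃}` of points of `S¹` with `λ₁λ₂λ₃ = 1` there
is exactly one triple `(s₁, s₂, s₃) ∈ ℝ³` with `s₁ ≤ s₂ ≤ s₃ ≤ s₁ + 1`,
`s₁ + s₂ + s₃ = 0` and `{e^{2πi s₁}, e^{2πi s₂}, e^{2πi s₃}} = {λ₁, λ₂, λ₃}`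
as multisets. -/
theorem existsUnique_lift_triple (l1 l2 l3 : Circle) (h : l1 * l2 * l3 = 1) :
    ∃! s : ℝ × ℝ × ℝ,
      s.1 ≤ s.2.1 ∧ s.2.1 ≤ s.2.2 ∧ s.2.2 ≤ s.1 + 1 ∧ s.1 + s.2.1 + s.2.2 = 0 ∧
        ({Circle.exp (2 * π * s.1), Circle.exp (2 * π * s.2.1), Circle.exp (2 * π * s.2.2)}
          : Multiset Circle) = {l1, l2, l3} := by
  obtain ⟨s, hs, hsM⟩ := exists_isSortedInPeriod_expMultiset_eq l1 l2 l3
  have hprod : Circle.exp (2 * π * (s.1 + s.2.1 + s.2.2)) = Circle.exp (2 * π * 0) := by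
    rw [← prod_expMultiset, hsM, mul_zero, Circle.exp_zero, ← h]
    simp [mul_assoc]
  obtain ⟨k, hk⟩ := Circle.exists_intCast_of_exp_two_pi_mul_eq hprod
  obtain ⟨t, ht, ht0, htM⟩ := hs.exists_sum_eq_zero (k := k) (by rw [hk, zero_add])
  refine ⟨t, ⟨ht.1, ht.2.1, ht.2.2, ht0, htM.trans hsM⟩, ?_⟩
  rintro u ⟨h12, h23, h31, hu0, huM⟩
  exact IsSortedInPeriod.eq_of_expMultiset_eq ⟨h12, h23, h31⟩ ht (hu0.trans ht0.symm)
    (huM.trans (htM.trans hsM).symm)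
end
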